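/- arXiv:2507.16448 — 2 statements merged into one kernel-verified Lean document; each statement's English description precedes it below -/
import Mathlib

section
/- (Lundberg's equation, right solution.) For v ∈ (0,1] let G_v := Σ_{n=0}^∞ v^n · M(n,1), where M(n,1) is the N×N matrix whose (i,j)-entry is the probability of {τ_1^+ = n, J_n = j} in the model with initial distribution δ_i and initial surplus x = 0. Then G_v satisfies G_v = v · Σ_{m=0}^∞ Λ(m) · G_v^m, the series on the right converging entrywise. -/
open scoped BigOperators

noncomputable section

namespace CMB

/-- The weight that the compound Markov binomial model with horizon `n`, jump matrices `Λ`
and initial distribution `μ` assigns to the path `(J, C)`. -/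
def pathWeight {N : ℕ} (Λ : ℕ → Matrix (Fin N) (Fin N) ℝ) (μ : Fin N → ℝ) (n : ℕ)
    (J : Fin (n + 1) → Fin N) (C : Fin n → ℕ) : ℝ :=
  μ (J 0) * ∏ k : Fin n, Λ (C k) (J k.castSucc) (J k.succ)

/-- The probability of the event `A` in the horizon-`n` compound Markov binomial model:
the sum of the weights of the paths belonging to the event. -/
def prob {N : ℕ} (Λ : ℕ → Matrix (Fin N) (Fin N) ℝ) (μ : Fin N → ℝ) (n : ℕ)
    (A : (Fin (n + 1) → Fin N) → (Fin n → ℕ) → Prop) : ℝ :=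
  ∑' p : { p : (Fin (n + 1) → Fin N) × (Fin n → ℕ) // A p.1 p.2 },
    pathWeight Λ μ n p.1.1 p.1.2

/-- Partial sums `S_k = C_1 + ⋯ + C_k` of the claims (`C i` is claim number `i+1`). -/
def S {n : ℕ} (C : Fin n → ℕ) (k : ℕ) : ℕ :=
  ∑ j : Fin n, if (j : ℕ) < k then C j else 0

/-- Dirac initial distribution `δ_i`. -/
def delta {N : ℕ} (i : Fin N) : Fin N → ℝ := fun i' => if i' = i then 1 else 0

/-- `hitM Λ n a i j` is the probability, in the model with initial distribution `δ_i` and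
initial surplus `x = 0` (so `X_k = k - S_k`), of the event `{τ_a^+ = n, J_n = j}`,
i.e. `X_k < a` for all `k < n` and `X_n ≥ a` and `J_n = j`. -/
def hitM {N : ℕ} (Λ : ℕ → Matrix (Fin N) (Fin N) ℝ) (n a : ℕ) : Matrix (Fin N) (Fin N) ℝ :=
  fun i j => prob Λ (delta i) n fun J C =>
    (∀ k, k < n → (k : ℤ) - S C k < (a : ℤ)) ∧ (a : ℤ) ≤ (n : ℤ) - S C n ∧ J (Fin.last n) = j

/-- `Gser Λ v a` is the matrix `G_v(a) = Σ_{n=0}^∞ v^n · M(n,a)`, entrywise. -/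
def Gser {N : ℕ} (Λ : ℕ → Matrix (Fin N) (Fin N) ℝ) (v : ℝ) (a : ℕ) :
    Matrix (Fin N) (Fin N) ℝ := fun i j => ∑' n : ℕ, v ^ n * hitM Λ n a i j

/-!
Everything is computed in `ℝ≥0∞`, where all series converge and can be rearranged freely.
Splitting a path after its first step gives `M(n+1, a+1) = ∑ₘ Λ(m) M(n, a+m)`. The surplus
rises by at most one per step, so climbing `a + b` means first reaching `a` exactly and then
climbing `b` more: `M(n, a+b) = ∑_{k+l=n} M(k,a) M(l,b)`, hence `G_v(a) = G_v(1)^a` for the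
generating functions. Substituting this into the first-step recursion at `a = 1` is Lundberg's
equation. The row masses `∑ⱼ ∑ₙ M(n,a)_{ij}` are at most `1`, so for `v ≤ 1` every entry is finite
and the identity passes to `ℝ`.
-/

end CMB

open scoped ENNReal
open Finset

theorem ENNReal.tsum_mul_tsum_eq_tsum_sum_antidiagonal (f g : ℕ → ℝ≥0∞) :
    (∑' n, f n) * ∑' n, g n = ∑' n, ∑ kl ∈ antidiagonal n, f kl.1 * g kl.2 := by
  simp_rw [← ENNReal.tsum_mul_right, ← ENNReal.tsum_mul_left]
  rw [← ENNReal.tsum_prod, ← HasAntidiagonal.sigmaAntidiagonalEquivProd.tsum_eq,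
    ENNReal.tsum_sigma']
  simp [← Finset.sum_coe_sort (antidiagonal _), tsum_fintype]

namespace Matrix

variable {ι κ l m n : Type*}

section ENNRealSeries

theorem ennreal_summable (f : ι → Matrix m n ℝ≥0∞) : Summable f :=
  Pi.summable.2 fun _ => Pi.summable.2 fun _ => ENNReal.summable

theorem ennreal_tsum_apply (f : ι → Matrix m n ℝ≥0∞) (i : m) (j : n) :
    (∑' k, f k) i j = ∑' k, f k i j :=
  (congrFun (tsum_apply (f := fun k => (f k : m → n → ℝ≥0∞)) (ennreal_summable f)) j).trans
    ENNReal.tsum_apply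

theorem ennreal_tsum_comm (f : ι → κ → Matrix m n ℝ≥0∞) :
    ∑' a, ∑' b, f a b = ∑' b, ∑' a, f a b := by
  ext i j
  simp only [ennreal_tsum_apply]
  exact ENNReal.tsum_comm

theorem ennreal_smul_tsum (c : ℝ≥0∞) (f : ι → Matrix m n ℝ≥0∞) :
    c • ∑' k, f k = ∑' k, c • f k := by
  ext i j
  simp only [smul_apply, smul_eq_mul, ennreal_tsum_apply, ENNReal.tsum_mul_left]

variable [Fintype m]

theorem ennreal_mul_tsum (A : Matrix l m ℝ≥0∞) (f : ι → Matrix m n ℝ≥0∞) :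
    A * ∑' k, f k = ∑' k, A * f k := by
  ext i j
  simp only [mul_apply, ennreal_tsum_apply, ← ENNReal.tsum_mul_left]
  exact (Summable.tsum_finsetSum fun _ _ => ENNReal.summable).symm

theorem ennreal_tsum_mul (f : ι → Matrix l m ℝ≥0∞) (A : Matrix m n ℝ≥0∞) :
    (∑' k, f k) * A = ∑' k, f k * A := by
  ext i j
  simp only [mul_apply, ennreal_tsum_apply, ← ENNReal.tsum_mul_right]
  exact (Summable.tsum_finsetSum fun _ _ => ENNReal.summable).symm

theorem ennreal_tsum_mul_tsum_eq_tsum_sum_antidiagonal (f : ℕ → Matrix l m ℝ≥0∞)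
    (g : ℕ → Matrix m n ℝ≥0∞) :
    (∑' k, f k) * ∑' k, g k = ∑' n, ∑ kl ∈ antidiagonal n, f kl.1 * g kl.2 := by
  ext i j
  simp only [mul_apply, ennreal_tsum_apply, sum_apply,
    ENNReal.tsum_mul_tsum_eq_tsum_sum_antidiagonal]
  rw [← Summable.tsum_finsetSum fun _ _ => ENNReal.summable]
  exact tsum_congr fun _ => sum_comm

end ENNRealSeries

section ToReal

variable [Fintype m] {A : Matrix l m ℝ≥0∞} {B : Matrix m n ℝ≥0∞}

theorem mul_apply_ne_top (hA : ∀ i j, A i j ≠ ⊤) (hB : ∀ i j, B i j ≠ ⊤) (i : l) (j : n) :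
    (A * B) i j ≠ ⊤ :=
  ENNReal.sum_ne_top.2 fun k _ => ENNReal.mul_ne_top (hA i k) (hB k j)

theorem map_toReal_mul (hA : ∀ i j, A i j ≠ ⊤) (hB : ∀ i j, B i j ≠ ⊤) :
    (A * B).map ENNReal.toReal = A.map ENNReal.toReal * B.map ENNReal.toReal := by
  ext i j
  simp only [map_apply, mul_apply,
    ENNReal.toReal_sum fun k _ => ENNReal.mul_ne_top (hA i k) (hB k j), ENNReal.toReal_mul]

variable [DecidableEq m] {A : Matrix m m ℝ≥0∞}

theorem pow_apply_ne_top (hA : ∀ i j, A i j ≠ ⊤) (k : ℕ) : ∀ i j, (A ^ k) i j ≠ ⊤ := by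
  induction k with
  | zero => intro i j; by_cases h : i = j <;> simp [h]
  | succ k ih => exact pow_succ A k ▸ mul_apply_ne_top ih hA

theorem map_toReal_pow (hA : ∀ i j, A i j ≠ ⊤) (k : ℕ) :
    (A ^ k).map ENNReal.toReal = A.map ENNReal.toReal ^ k := by
  induction k with
  | zero => simpa using Matrix.map_one _ ENNReal.toReal_zero ENNReal.toReal_one
  | succ k ih => rw [pow_succ, map_toReal_mul (pow_apply_ne_top hA k) hA, ih, pow_succ]

theorem hasSum_map_toReal_of_eq_smul_tsum (hA : ∀ i j, A i j ≠ ⊤) {L : ℕ → Matrix m m ℝ≥0∞}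
    (hL : ∀ k i j, L k i j ≠ ⊤) {c : ℝ≥0∞} (h : A = c • ∑' k, L k * A ^ k) (i j : m) :
    HasSum (fun k => c.toReal * ((L k).map ENNReal.toReal * A.map ENNReal.toReal ^ k) i j)
      (A.map ENNReal.toReal i j) := by
  have hsum : A i j = ∑' k, c * (L k * A ^ k) i j := by
    conv_lhs => rw [h]
    simp [ennreal_tsum_apply, ENNReal.tsum_mul_left]
  have hfin : ∑' k, c * (L k * A ^ k) i j ≠ ⊤ := hsum ▸ hA i j
  simp_rw [← map_toReal_pow hA, ← map_toReal_mul (hL _) (pow_apply_ne_top hA _), map_apply,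
    ← ENNReal.toReal_mul, hsum, ENNReal.tsum_toReal_eq (ENNReal.ne_top_of_tsum_ne_top hfin)]
  exact ENNReal.hasSum_toReal hfin

end ToReal

end Matrix

namespace CMB

variable {N : ℕ} {Λ : ℕ → Matrix (Fin N) (Fin N) ℝ}

theorem S_zero {n : ℕ} (C : Fin n → ℕ) : S C 0 = 0 := by
  simp [S]

theorem S_cons {n : ℕ} (m : ℕ) (C : Fin n → ℕ) (k : ℕ) :
    S (Fin.cons m C : Fin (n + 1) → ℕ) (k + 1) = m + S C k := by
  simp [S, Fin.sum_univ_succ]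

def FirstPassage (n a : ℕ) (j : Fin N) (J : Fin (n + 1) → Fin N) (C : Fin n → ℕ) : Prop :=
  (∀ k, k < n → (k : ℤ) - S C k < (a : ℤ)) ∧ (a : ℤ) ≤ (n : ℤ) - S C n ∧ J (Fin.last n) = j

theorem firstPassage_zero_iff {a : ℕ} {j : Fin N} {J : Fin 1 → Fin N} {C : Fin 0 → ℕ} :
    FirstPassage 0 a j J C ↔ a = 0 ∧ J 0 = j := by
  simp [FirstPassage, S_zero]

theorem not_firstPassage_succ_zero {n : ℕ} {j : Fin N} {J : Fin (n + 2) → Fin N}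
    {C : Fin (n + 1) → ℕ} : ¬ FirstPassage (n + 1) 0 j J C := fun h => by
  simpa [S_zero] using h.1 0 n.succ_pos

theorem firstPassage_cons_iff {n a m : ℕ} {j j₀ : Fin N} {J : Fin (n + 1) → Fin N}
    {C : Fin n → ℕ} :
    FirstPassage (n + 1) (a + 1) j (Fin.cons j₀ J) (Fin.cons m C) ↔
      FirstPassage n (a + m) j J C := by
  simp only [FirstPassage, ← Fin.succ_last, Fin.cons_succ, Nat.forall_lt_succ_left, S_cons, S_zero]
  push_cast
  have hlt (x y : ℤ) : x + 1 - (m + y) < a + 1 ↔ x - y < a + m := by omega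
  have hle (x y : ℤ) : a + 1 ≤ x + 1 - (m + y) ↔ a + m ≤ x - y := by omega
  simp only [hlt, hle, show (0 : ℤ) < a + 1 by omega, true_and]

def jumpMatrix (Λ : ℕ → Matrix (Fin N) (Fin N) ℝ) (m : ℕ) : Matrix (Fin N) (Fin N) ℝ≥0∞ :=
  (Λ m).map ENNReal.ofReal

theorem sum_tsum_jumpMatrix_eq_one {P : Matrix (Fin N) (Fin N) ℝ} (hΛ : ∀ m i j, 0 ≤ Λ m i j)
    (hP : ∀ i j, HasSum (fun m => Λ m i j) (P i j)) (hPstoch : ∀ i, ∑ j, P i j = 1) (i : Fin N) :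
    ∑ l, ∑' m, jumpMatrix Λ m i l = 1 := by
  have hrow (l : Fin N) : ∑' m, jumpMatrix Λ m i l = ENNReal.ofReal (P i l) := by
    rw [(hP i l).tsum_eq.symm, ENNReal.ofReal_tsum_of_nonneg (fun m => hΛ m i l) (hP i l).summable]
    rfl
  rw [sum_congr rfl fun l _ => hrow l, ← ENNReal.ofReal_sum_of_nonneg fun l _ =>
    (hP i l).nonneg fun m => hΛ m i l, hPstoch i, ENNReal.ofReal_one]

theorem jumpMatrix_map_toReal (hΛ : ∀ m i j, 0 ≤ Λ m i j) (m : ℕ) :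
    (jumpMatrix Λ m).map ENNReal.toReal = Λ m := by
  ext
  simp [jumpMatrix, ENNReal.toReal_ofReal (hΛ _ _ _)]

def pathMass (Λ : ℕ → Matrix (Fin N) (Fin N) ℝ) (i : Fin N) (n : ℕ)
    (A : (Fin (n + 1) → Fin N) → (Fin n → ℕ) → Prop) : ℝ≥0∞ :=
  ∑' p : (Fin (n + 1) → Fin N) × (Fin n → ℕ),
    {p | A p.1 p.2}.indicator (fun p => ENNReal.ofReal (pathWeight Λ (delta i) n p.1 p.2)) p

theorem delta_nonneg (i i' : Fin N) : 0 ≤ delta i i' := by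
  unfold delta
  split_ifs <;> norm_num

theorem pathWeight_nonneg (hΛ : ∀ m i j, 0 ≤ Λ m i j) {μ : Fin N → ℝ} (hμ : ∀ i, 0 ≤ μ i)
    (n : ℕ) (J : Fin (n + 1) → Fin N) (C : Fin n → ℕ) : 0 ≤ pathWeight Λ μ n J C :=
  mul_nonneg (hμ _) (prod_nonneg fun _ _ => hΛ _ _ _)

theorem prob_delta_eq_toReal_pathMass (hΛ : ∀ m i j, 0 ≤ Λ m i j) (i : Fin N) (n : ℕ)
    (A : (Fin (n + 1) → Fin N) → (Fin n → ℕ) → Prop) :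
    prob Λ (delta i) n A = (pathMass Λ i n A).toReal := by
  rw [prob, pathMass, ENNReal.tsum_toReal_eq fun p => ?_]
  · refine (tsum_subtype {p : _ × _ | A p.1 p.2}
      fun p => pathWeight Λ (delta i) n p.1 p.2).trans (tsum_congr fun p => ?_)
    by_cases hp : A p.1 p.2
    · simp [hp, pathWeight_nonneg hΛ (delta_nonneg i)]
    · simp [hp]
  · by_cases hp : A p.1 p.2 <;> simp [hp]

open Classical in
theorem pathMass_zero (i : Fin N) (A : (Fin 1 → Fin N) → (Fin 0 → ℕ) → Prop) :
    pathMass Λ i 0 A = if A (fun _ => i) Fin.elim0 then 1 else 0 := by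
  rw [pathMass, tsum_eq_single ((fun _ => i), Fin.elim0)]
  · simp [Set.indicator_apply, pathWeight, delta]
  · rintro ⟨J, C⟩ hp
    have hJ : J 0 ≠ i := fun h =>
      hp (Prod.ext (funext fun x => Fin.fin_one_eq_zero x ▸ h) (Subsingleton.elim _ _))
    simp [Set.indicator_apply, pathWeight, delta, hJ]

theorem pathWeight_cons (μ : Fin N → ℝ) (n : ℕ) (j₀ : Fin N) (J : Fin (n + 1) → Fin N) (m : ℕ)
    (C : Fin n → ℕ) :
    pathWeight Λ μ (n + 1) (Fin.cons j₀ J) (Fin.cons m C)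
      = μ j₀ * ∑ l, Λ m j₀ l * pathWeight Λ (delta l) n J C := by
  simp [pathWeight, delta, Fin.prod_univ_succ]

theorem pathMass_succ (hΛ : ∀ m i j, 0 ≤ Λ m i j) (i : Fin N) (n : ℕ)
    (A : (Fin (n + 2) → Fin N) → (Fin (n + 1) → ℕ) → Prop) :
    pathMass Λ i (n + 1) A = ∑' m, ∑ l, jumpMatrix Λ m i l *
      pathMass Λ l n (fun J C => A (Fin.cons i J) (Fin.cons m C)) := by
  let e : (Fin N × ℕ) × ((Fin (n + 1) → Fin N) × (Fin n → ℕ))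
      ≃ (Fin (n + 2) → Fin N) × (Fin (n + 1) → ℕ) :=
    (Equiv.prodProdProdComm _ _ _ _).trans
      ((Fin.consEquiv fun _ => Fin N).prodCongr (Fin.consEquiv fun _ => ℕ))
  have he (q : (Fin N × ℕ) × ((Fin (n + 1) → Fin N) × (Fin n → ℕ))) :
      e q = (Fin.cons q.1.1 q.2.1, Fin.cons q.1.2 q.2.2) := rfl
  rw [pathMass, ← e.tsum_eq, ENNReal.tsum_prod', ENNReal.tsum_prod', tsum_eq_single i]
  · refine tsum_congr fun m => ?_
    simp only [pathMass, ← ENNReal.tsum_mul_left]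
    rw [← Summable.tsum_finsetSum fun _ _ => ENNReal.summable]
    refine tsum_congr fun p => ?_
    rw [he]
    by_cases hA : A (Fin.cons i p.1) (Fin.cons m p.2)
    · have hw (l : Fin N) : 0 ≤ Λ m i l * pathWeight Λ (delta l) n p.1 p.2 :=
        mul_nonneg (hΛ m i l) (pathWeight_nonneg hΛ (delta_nonneg l) n _ _)
      simp [hA, pathWeight_cons, delta, jumpMatrix, ENNReal.ofReal_sum_of_nonneg fun l _ => hw l,
        ENNReal.ofReal_mul (hΛ m i _)]
    · simp [hA]
  · intro j₀ hj₀
    simp [he, pathWeight_cons, delta, hj₀]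

def hitMass (Λ : ℕ → Matrix (Fin N) (Fin N) ℝ) (n a : ℕ) : Matrix (Fin N) (Fin N) ℝ≥0∞ :=
  fun i j => pathMass Λ i n (FirstPassage n a j)

theorem hitM_eq_toReal (hΛ : ∀ m i j, 0 ≤ Λ m i j) (n a : ℕ) (i j : Fin N) :
    hitM Λ n a i j = (hitMass Λ n a i j).toReal :=
  prob_delta_eq_toReal_pathMass hΛ i n _

theorem hitMass_zero (a : ℕ) : hitMass Λ 0 a = if a = 0 then 1 else 0 := by
  ext i j
  classical
  rw [hitMass, pathMass_zero]
  by_cases ha : a = 0 <;> simp [firstPassage_zero_iff, Matrix.one_apply, ha]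

theorem hitMass_succ_zero (n : ℕ) : hitMass Λ (n + 1) 0 = 0 := by
  ext i j
  simp [hitMass, pathMass, not_firstPassage_succ_zero]

theorem hitMass_succ_succ (hΛ : ∀ m i j, 0 ≤ Λ m i j) (n a : ℕ) :
    hitMass Λ (n + 1) (a + 1) = ∑' m, jumpMatrix Λ m * hitMass Λ n (a + m) := by
  ext i j
  simp only [Matrix.ennreal_tsum_apply, Matrix.mul_apply, hitMass, pathMass_succ hΛ,
    firstPassage_cons_iff]

theorem hitMass_add (hΛ : ∀ m i j, 0 ≤ Λ m i j) (n a b : ℕ) :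
    hitMass Λ n (a + b) = ∑ kl ∈ antidiagonal n, hitMass Λ kl.1 a * hitMass Λ kl.2 b := by
  induction n generalizing a with
  | zero => by_cases ha : a = 0 <;> by_cases hb : b = 0 <;> simp [hitMass_zero, ha, hb]
  | succ n ih =>
    cases a with
    | zero => simp [Nat.sum_antidiagonal_succ, hitMass_zero, hitMass_succ_zero]
    | succ a =>
      calc hitMass Λ (n + 1) (a + 1 + b)
          = ∑' m, jumpMatrix Λ m * hitMass Λ n (a + m + b) := by
            rw [Nat.add_right_comm, hitMass_succ_succ hΛ]
            simp_rw [Nat.add_right_comm a b]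
        _ = ∑ kl ∈ antidiagonal n, (∑' m, jumpMatrix Λ m * hitMass Λ kl.1 (a + m)) *
              hitMass Λ kl.2 b := by
            simp_rw [ih, mul_sum, Matrix.ennreal_tsum_mul, ← Matrix.mul_assoc]
            exact Summable.tsum_finsetSum fun _ _ => Matrix.ennreal_summable _
        _ = ∑ kl ∈ antidiagonal (n + 1), hitMass Λ kl.1 (a + 1) * hitMass Λ kl.2 b := by
            simp [Nat.sum_antidiagonal_succ, hitMass_zero, hitMass_succ_succ hΛ]

theorem sum_sum_range_hitMass_le_one (hΛ : ∀ m i j, 0 ≤ Λ m i j)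
    (hsub : ∀ i, ∑ l, ∑' m, jumpMatrix Λ m i l ≤ 1) (T a : ℕ) (i : Fin N) :
    ∑ j, ∑ n ∈ range T, hitMass Λ n a i j ≤ 1 := by
  induction T generalizing a i with
  | zero => simp
  | succ T ih =>
    cases a with
    | zero => simp [sum_range_succ', hitMass_zero, hitMass_succ_zero, Matrix.one_apply]
    | succ a =>
      have hsplit : ∑ n ∈ range (T + 1), hitMass Λ n (a + 1)
          = ∑' m, jumpMatrix Λ m * ∑ n ∈ range T, hitMass Λ n (a + m) := by
        simp_rw [sum_range_succ', hitMass_zero, hitMass_succ_succ hΛ, mul_sum]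
        simp [Summable.tsum_finsetSum fun _ _ => Matrix.ennreal_summable _]
      calc ∑ j, ∑ n ∈ range (T + 1), hitMass Λ n (a + 1) i j
          = ∑' m, ∑ l, jumpMatrix Λ m i l * ∑ j, ∑ n ∈ range T, hitMass Λ n (a + m) l j := by
            simp_rw [← Matrix.sum_apply, hsplit, Matrix.ennreal_tsum_apply, Matrix.mul_apply,
              mul_sum, Matrix.sum_apply]
            rw [← Summable.tsum_finsetSum fun _ _ => ENNReal.summable]
            exact tsum_congr fun m => sum_comm
        _ ≤ ∑' m, ∑ l, jumpMatrix Λ m i l := by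
            gcongr with m l
            exact mul_le_of_le_one_right' (ih _ _)
        _ ≤ 1 := by
            rw [Summable.tsum_finsetSum fun _ _ => ENNReal.summable]
            exact hsub i

def hitGF (Λ : ℕ → Matrix (Fin N) (Fin N) ℝ) (w : ℝ≥0∞) (a : ℕ) : Matrix (Fin N) (Fin N) ℝ≥0∞ :=
  ∑' n, w ^ n • hitMass Λ n a

theorem hitGF_zero (w : ℝ≥0∞) : hitGF Λ w 0 = 1 := by
  rw [hitGF, tsum_eq_single 0 fun n hn => ?_]
  · simp [hitMass_zero]
  · obtain ⟨n, rfl⟩ := Nat.exists_eq_succ_of_ne_zero hn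
    simp [hitMass_succ_zero]

theorem hitGF_add (hΛ : ∀ m i j, 0 ≤ Λ m i j) (w : ℝ≥0∞) (a b : ℕ) :
    hitGF Λ w (a + b) = hitGF Λ w a * hitGF Λ w b := by
  rw [hitGF, hitGF, hitGF, Matrix.ennreal_tsum_mul_tsum_eq_tsum_sum_antidiagonal]
  refine tsum_congr fun n => ?_
  rw [hitMass_add hΛ, smul_sum]
  refine sum_congr rfl fun kl hkl => ?_
  rw [Matrix.smul_mul, Matrix.mul_smul, smul_smul, ← pow_add, mem_antidiagonal.1 hkl]

theorem hitGF_eq_pow (hΛ : ∀ m i j, 0 ≤ Λ m i j) (w : ℝ≥0∞) (a : ℕ) :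
    hitGF Λ w a = hitGF Λ w 1 ^ a := by
  induction a with
  | zero => exact hitGF_zero w
  | succ a ih => rw [hitGF_add hΛ, ih, pow_succ]

theorem hitGF_one (hΛ : ∀ m i j, 0 ≤ Λ m i j) (w : ℝ≥0∞) :
    hitGF Λ w 1 = w • ∑' m, jumpMatrix Λ m * hitGF Λ w 1 ^ m := by
  have hstep (n : ℕ) : hitMass Λ (n + 1) 1 = ∑' m, jumpMatrix Λ m * hitMass Λ n m := by
    simpa using hitMass_succ_succ hΛ n 0
  calc hitGF Λ w 1 = ∑' n, w ^ (n + 1) • hitMass Λ (n + 1) 1 := by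
        rw [hitGF, tsum_eq_zero_add' (Matrix.ennreal_summable _)]
        simp [hitMass_zero]
    _ = w • ∑' m, jumpMatrix Λ m * hitGF Λ w m := by
        simp_rw [hstep, hitGF, Matrix.ennreal_mul_tsum, Matrix.ennreal_smul_tsum, Matrix.mul_smul,
          smul_smul, pow_succ']
        exact Matrix.ennreal_tsum_comm _
    _ = w • ∑' m, jumpMatrix Λ m * hitGF Λ w 1 ^ m := by
        congr 1
        exact tsum_congr fun m => by rw [hitGF_eq_pow hΛ w m]

theorem hitGF_apply_le_one (hΛ : ∀ m i j, 0 ≤ Λ m i j)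
    (hsub : ∀ i, ∑ l, ∑' m, jumpMatrix Λ m i l ≤ 1) {w : ℝ≥0∞} (hw : w ≤ 1) (a : ℕ) (i j : Fin N) :
    hitGF Λ w a i j ≤ 1 :=
  calc hitGF Λ w a i j = ∑' n, w ^ n * hitMass Λ n a i j := by
        simp [hitGF, Matrix.ennreal_tsum_apply]
    _ ≤ ∑' n, ∑ j', hitMass Λ n a i j' := ENNReal.tsum_le_tsum fun n =>
        (mul_le_of_le_one_left' (pow_le_one₀ zero_le hw)).trans
          (single_le_sum (fun _ _ => zero_le) (mem_univ j))
    _ ≤ 1 := ENNReal.tsum_le_of_sum_range_le fun T => by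
        rw [sum_comm]
        exact sum_sum_range_hitMass_le_one hΛ hsub T a i

theorem hitMass_apply_ne_top (hΛ : ∀ m i j, 0 ≤ Λ m i j)
    (hsub : ∀ i, ∑ l, ∑' m, jumpMatrix Λ m i l ≤ 1) (n a : ℕ) (i j : Fin N) :
    hitMass Λ n a i j ≠ ⊤ := by
  refine ne_top_of_le_ne_top ENNReal.one_ne_top
    (le_trans ?_ (hitGF_apply_le_one hΛ hsub le_rfl a i j))
  simp only [hitGF, one_pow, one_smul, Matrix.ennreal_tsum_apply]
  exact ENNReal.le_tsum n

theorem Gser_eq_map_toReal (hΛ : ∀ m i j, 0 ≤ Λ m i j)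
    (hsub : ∀ i, ∑ l, ∑' m, jumpMatrix Λ m i l ≤ 1) {v : ℝ} (hv : 0 ≤ v) (a : ℕ) :
    Gser Λ v a = (hitGF Λ (ENNReal.ofReal v) a).map ENNReal.toReal := by
  ext i j
  rw [Matrix.map_apply, hitGF, Matrix.ennreal_tsum_apply, ENNReal.tsum_toReal_eq fun n => ?_]
  · refine tsum_congr fun n => ?_
    simp [hitM_eq_toReal hΛ, ENNReal.toReal_ofReal hv]
  · exact ENNReal.mul_ne_top (ENNReal.pow_ne_top ENNReal.ofReal_ne_top)
      (hitMass_apply_ne_top hΛ hsub n a i j)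

theorem lundberg_right_general
    {N : ℕ}
    (Λ : ℕ → Matrix (Fin N) (Fin N) ℝ) (P : Matrix (Fin N) (Fin N) ℝ)
    (hΛ : ∀ m i j, 0 ≤ Λ m i j)
    (hP : ∀ i j, HasSum (fun m => Λ m i j) (P i j))
    (hPstoch : ∀ i, ∑ j, P i j = 1)
    (v : ℝ) (hv0 : 0 < v) (hv1 : v ≤ 1) :
    ∀ i j, HasSum (fun m : ℕ => v * (Λ m * Gser Λ v 1 ^ m) i j) (Gser Λ v 1 i j) := by
  have hsub i := (sum_tsum_jumpMatrix_eq_one hΛ hP hPstoch i).le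
  have hG k l : hitGF Λ (ENNReal.ofReal v) 1 k l ≠ ⊤ := ne_top_of_le_ne_top
    ENNReal.one_ne_top (hitGF_apply_le_one hΛ hsub (ENNReal.ofReal_le_one.2 hv1) 1 k l)
  intro i j
  have h := Matrix.hasSum_map_toReal_of_eq_smul_tsum (L := jumpMatrix Λ) hG
    (fun _ _ _ => ENNReal.ofReal_ne_top) (hitGF_one hΛ _) i j
  simp only [ENNReal.toReal_ofReal hv0.le, jumpMatrix_map_toReal hΛ] at h
  rwa [← Gser_eq_map_toReal hΛ hsub hv0.le] at h

/-- Lundberg's equation, right solution.  For `v ∈ (0,1]`, the matrix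
`G_v = Σ_n v^n M(n,1)` satisfies `G_v = v·Σ_{m=0}^∞ Λ(m)·G_v^m`, the series on the right
converging entrywise. -/
theorem lundberg_right
    {N : ℕ} (hN : 1 ≤ N)
    (Λ : ℕ → Matrix (Fin N) (Fin N) ℝ) (P : Matrix (Fin N) (Fin N) ℝ)
    (hΛ : ∀ m i j, 0 ≤ Λ m i j)
    (hP : ∀ i j, HasSum (fun m => Λ m i j) (P i j))
    (hPstoch : ∀ i, ∑ j, P i j = 1)
    (v : ℝ) (hv0 : 0 < v) (hv1 : v ≤ 1) :
    ∀ i j, HasSum (fun m : ℕ => v * (Λ m * Gser Λ v 1 ^ m) i j) (Gser Λ v 1 i j) :=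
  lundberg_right_general Λ P hΛ hP hPstoch v hv0 hv1

end CMB
end
end

section
/- (First-passage decomposition for the reversed process.) Assume the environment chain is stationary with distribution π. Then for every x ∈ ℕ, every n ≥ 1 and every integer m with 1 ≤ m ≤ x+n: P_π( τ̃_m^+ ≥ n and X̃_n = m − x ) = π·Λ^{*n}(n+x−m)·e − Σ_{k=m}^{n−1} π·Λ^{*(n−k)}(n+x−k)·V(k, m)·e. -/
open scoped BigOperators

noncomputable section

namespace CMB

/-- `conv Λ n` is the `n`-fold matrix convolution `Λ^{*n}`. -/
def conv {N : ℕ} (Λ : ℕ → Matrix (Fin N) (Fin N) ℝ) : ℕ → ℕ → Matrix (Fin N) (Fin N) ℝ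
  | 0, m => if m = 0 then 1 else 0
  | n + 1, m => ∑ k ∈ Finset.range (m + 1), conv Λ n k * Λ (m - k)

/-- Jump matrices `Λ̃(m)`, with `λ̃_{ij}(m) = (π_j/π_i)·λ_{ji}(m)`, of the time-reversed model. -/
def lamTilde {N : ℕ} (Λ : ℕ → Matrix (Fin N) (Fin N) ℝ) (π : Fin N → ℝ) :
    ℕ → Matrix (Fin N) (Fin N) ℝ := fun m i j => π j / π i * Λ m j i

/-- `V(n,a) := Δ_π⁻¹ · M̃(n,a)ᵀ · Δ_π`, where `M̃(n,a)` is the matrix of first-passage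
probabilities of the time-reversed model. -/
def Vmat {N : ℕ} (Λ : ℕ → Matrix (Fin N) (Fin N) ℝ) (π : Fin N → ℝ) (n a : ℕ) :
    Matrix (Fin N) (Fin N) ℝ := fun i j => π j / π i * hitM (lamTilde Λ π) n a j i


/-!
Summing out the environment path, the weight of all paths with claim sequence `C` and a
prescribed final state is an entry of `μ · Λ(C₁)⋯Λ(Cₙ)`; summed over all `C` with total `s`,
these products give `Λ^{*n}(s)`. The event `{X̃_n = m − x}` splits according to whether the
surplus stays below `m` before time `n` or first reaches `m` at some time `k ∈ [m, n-1]`. Being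
upward skip-free, the surplus then sits exactly at `m`, so the claim sequence factors at `k` into
a first-passage piece of total `k - m` and a free piece of total `n - k + x`. Finally
`Λ̃(c) = Δ_π⁻¹ Λ(c)ᵀ Δ_π`, and `A ↦ Δ_π⁻¹ Aᵀ Δ_π` reverses products and preserves `π·A·e`, which
turns the reversed-model quantities into `Λ^{*n}` and `V(k, m)`.
-/

open Finset Matrix

section Convolution

variable {N : ℕ} (Λ : ℕ → Matrix (Fin N) (Fin N) ℝ)

theorem conv_eq_coeff_pow (n m : ℕ) :
    conv Λ n m = PowerSeries.coeff m (PowerSeries.mk Λ ^ n) := by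
  induction n generalizing m with
  | zero => simp [conv, PowerSeries.coeff_one]
  | succ n ih =>
    rw [conv, pow_succ, PowerSeries.coeff_mul,
      Nat.sum_antidiagonal_eq_sum_range_succ fun i j =>
        PowerSeries.coeff i (PowerSeries.mk Λ ^ n) * PowerSeries.coeff j (PowerSeries.mk Λ)]
    simp [ih]

theorem conv_succ (n m : ℕ) :
    conv Λ (n + 1) m = ∑ p ∈ antidiagonal m, conv Λ n p.1 * Λ p.2 := by
  simp only [conv_eq_coeff_pow, pow_succ, PowerSeries.coeff_mul, PowerSeries.coeff_mk]

theorem conv_succ' (n m : ℕ) :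
    conv Λ (n + 1) m = ∑ p ∈ antidiagonal m, Λ p.1 * conv Λ n p.2 := by
  simp only [conv_eq_coeff_pow, pow_succ', PowerSeries.coeff_mul, PowerSeries.coeff_mk]

end Convolution

section Reversal

variable {ι : Type*} [Fintype ι] {π : ι → ℝ}

def weightedTotal (π : ι → ℝ) (A : Matrix ι ι ℝ) : ℝ := ∑ i, ∑ j, π i * A i j

theorem weightedTotal_sum {α : Type*} (s : Finset α) (A : α → Matrix ι ι ℝ) :
    weightedTotal π (∑ a ∈ s, A a) = ∑ a ∈ s, weightedTotal π (A a) := by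
  simp only [weightedTotal, Matrix.sum_apply, Finset.mul_sum]
  calc _ = ∑ i, ∑ a ∈ s, ∑ j, π i * A a i j := sum_congr rfl fun i _ => sum_comm
    _ = _ := sum_comm

variable [DecidableEq ι]

def piReverse (π : ι → ℝ) (A : Matrix ι ι ℝ) : Matrix ι ι ℝ :=
  diagonal π⁻¹ * Aᵀ * diagonal π

theorem piReverse_apply (A : Matrix ι ι ℝ) (i j : ι) :
    piReverse π A i j = π j / π i * A j i := by
  simp [piReverse, diagonal_mul, mul_diagonal, div_eq_inv_mul, mul_comm, mul_left_comm]

theorem piReverse_mul (hπ : ∀ i, π i ≠ 0) (A B : Matrix ι ι ℝ) :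
    piReverse π (A * B) = piReverse π B * piReverse π A := by
  have h : diagonal π * diagonal π⁻¹ = 1 := by
    rw [diagonal_mul_diagonal, ← diagonal_one]
    exact congrArg diagonal (funext fun i => mul_inv_cancel₀ (hπ i))
  simp only [piReverse, transpose_mul, Matrix.mul_assoc]
  rw [← Matrix.mul_assoc (diagonal π), h, Matrix.one_mul]

theorem piReverse_one (hπ : ∀ i, π i ≠ 0) : piReverse π (1 : Matrix ι ι ℝ) = 1 := by
  rw [piReverse, transpose_one, Matrix.mul_one, diagonal_mul_diagonal, ← diagonal_one]
  exact congrArg diagonal (funext fun i => inv_mul_cancel₀ (hπ i))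

theorem piReverse_zero : piReverse π (0 : Matrix ι ι ℝ) = 0 := by
  simp [piReverse]

theorem piReverse_sum {α : Type*} (s : Finset α) (A : α → Matrix ι ι ℝ) :
    piReverse π (∑ a ∈ s, A a) = ∑ a ∈ s, piReverse π (A a) := by
  simp only [piReverse, transpose_sum, Matrix.mul_sum, Matrix.sum_mul]

theorem piReverse_piReverse (hπ : ∀ i, π i ≠ 0) (A : Matrix ι ι ℝ) :
    piReverse π (piReverse π A) = A := by
  ext i j
  rw [piReverse_apply, piReverse_apply]
  field_simp [hπ i, hπ j]

theorem weightedTotal_piReverse (hπ : ∀ i, π i ≠ 0) (A : Matrix ι ι ℝ) :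
    weightedTotal π (piReverse π A) = weightedTotal π A := by
  simp only [weightedTotal, piReverse_apply]
  rw [sum_comm]
  exact sum_congr rfl fun i _ => sum_congr rfl fun j _ => by field_simp [hπ j]

end Reversal

section ReversedModel

variable {N : ℕ} {π : Fin N → ℝ} (Λ : ℕ → Matrix (Fin N) (Fin N) ℝ)

theorem conv_piReverse (hπ : ∀ i, π i ≠ 0) (n m : ℕ) :
    conv (fun c => piReverse π (Λ c)) n m = piReverse π (conv Λ n m) := by
  induction n generalizing m with
  | zero => by_cases hm : m = 0 <;> simp [conv, hm, piReverse_one hπ, piReverse_zero]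
  | succ n ih =>
    rw [conv_succ, conv_succ', piReverse_sum, ← Nat.sum_antidiagonal_swap]
    exact sum_congr rfl fun p _ => by rw [ih, Prod.fst_swap, Prod.snd_swap, piReverse_mul hπ]

theorem lamTilde_eq (π : Fin N → ℝ) (c : ℕ) : lamTilde Λ π c = piReverse π (Λ c) := by
  ext i j
  rw [piReverse_apply]
  rfl

theorem conv_lamTilde (hπ : ∀ i, π i ≠ 0) (n m : ℕ) :
    conv (lamTilde Λ π) n m = piReverse π (conv Λ n m) := by
  rw [← conv_piReverse Λ hπ, ← funext (lamTilde_eq Λ π)]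

theorem Vmat_eq (π : Fin N → ℝ) (k m : ℕ) :
    Vmat Λ π k m = piReverse π (hitM (lamTilde Λ π) k m) := by
  ext i j
  rw [piReverse_apply]
  rfl

end ReversedModel

section ClaimProducts

variable {ι R : Type*} [Fintype ι] [DecidableEq ι] [Semiring R] (W : ℕ → Matrix ι ι R)

def claimProd {n : ℕ} (C : Fin n → ℕ) : Matrix ι ι R :=
  (List.ofFn fun k => W (C k)).prod

@[simp]
theorem claimProd_elim0 (C : Fin 0 → ℕ) : claimProd W C = 1 := by
  simp [claimProd]

theorem claimProd_cons {n : ℕ} (c : ℕ) (C : Fin n → ℕ) :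
    claimProd W (Fin.cons c C : Fin (n + 1) → ℕ) = W c * claimProd W C := by
  simp [claimProd, List.ofFn_succ]

theorem claimProd_append {k r : ℕ} (u : Fin k → ℕ) (v : Fin r → ℕ) :
    claimProd W (Fin.append u v) = claimProd W u * claimProd W v := by
  simp [claimProd, List.ofFn_add]

end ClaimProducts

section Antidiagonal

variable {M : Type*} [AddCommMonoid M]

theorem sum_finAntidiagonal_succ (n s : ℕ) (f : (Fin (n + 1) → ℕ) → M) :
    ∑ C ∈ finAntidiagonal (n + 1) s, f C =
      ∑ p ∈ antidiagonal s, ∑ C ∈ finAntidiagonal n p.2, f (Fin.cons p.1 C) := by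
  rw [finAntidiagonal, finAntidiagonal.aux, sum_disjiUnion]
  simp only [sum_map]
  rfl

theorem sum_finAntidiagonal_append {k r a b : ℕ} (P : (Fin k → ℕ) → Prop) [DecidablePred P]
    (hP : ∀ u, P u → ∑ t, u t = a) (f : (Fin (k + r) → ℕ) → M) :
    ∑ C ∈ finAntidiagonal (k + r) (a + b) with P (fun t => C (Fin.castAdd r t)), f C =
      ∑ u ∈ finAntidiagonal k a with P u, ∑ v ∈ finAntidiagonal r b, f (Fin.append u v) := by
  rw [← sum_product']
  refine sum_nbij' (fun C => (fun t => C (Fin.castAdd r t), fun t => C (Fin.natAdd k t)))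
    (fun p => Fin.append p.1 p.2) (fun C hC => ?_) (fun p hp => ?_) (fun C _ => ?_)
    (fun p _ => ?_) (fun C _ => ?_)
  · simp only [mem_filter, mem_finAntidiagonal, Fin.sum_univ_add, mem_product] at hC ⊢
    have := hP _ hC.2
    exact ⟨⟨this, hC.2⟩, by omega⟩
  · simp only [mem_filter, mem_finAntidiagonal, Fin.sum_univ_add, mem_product,
      Fin.append_left, Fin.append_right] at hp ⊢
    exact ⟨by rw [hp.1.1, hp.2], hp.1.2⟩
  · exact Fin.append_castAdd_natAdd
  · simp [Fin.append_left, Fin.append_right]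
  · simp only [Fin.append_castAdd_natAdd]

theorem sum_claimProd_finAntidiagonal {N : ℕ} (Λ : ℕ → Matrix (Fin N) (Fin N) ℝ) (n s : ℕ) :
    ∑ C ∈ finAntidiagonal n s, claimProd Λ C = conv Λ n s := by
  induction n generalizing s with
  | zero => by_cases hs : s = 0 <;> simp [finAntidiagonal, finAntidiagonal.aux, conv, hs]
  | succ n ih =>
    simp only [sum_finAntidiagonal_succ, claimProd_cons, ← Matrix.mul_sum, ih, conv_succ']

end Antidiagonal

theorem sum_pi_fin_succ {α M : Type*} [Fintype α] [AddCommMonoid M] {n : ℕ}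
    (f : (Fin (n + 1) → α) → M) : ∑ J, f J = ∑ a, ∑ J : Fin n → α, f (Fin.cons a J) := by
  rw [← (Fin.consEquiv fun _ => α).sum_comp, Fintype.sum_prod_type]
  rfl

section Paths

variable {N : ℕ} (Λ : ℕ → Matrix (Fin N) (Fin N) ℝ)

theorem sum_pathWeight_cons {n : ℕ} (μ : Fin N → ℝ) (c : ℕ) (C : Fin n → ℕ)
    (J : Fin (n + 1) → Fin N) :
    ∑ j, pathWeight Λ μ (n + 1) (Fin.cons j J) (Fin.cons c C) =
      pathWeight Λ (μ ᵥ* Λ c) n J C := by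
  simp only [pathWeight, Fin.prod_univ_succ, Fin.cons_zero, Fin.castSucc_zero, Fin.cons_succ,
    ← Fin.succ_castSucc, vecMul, dotProduct, sum_mul, mul_assoc]

theorem sum_pathWeight_mul_last (μ g : Fin N → ℝ) {n : ℕ} (C : Fin n → ℕ) :
    ∑ J, pathWeight Λ μ n J C * g (J (Fin.last n)) = μ ᵥ* claimProd Λ C ⬝ᵥ g := by
  induction C using Fin.consInduction generalizing μ with
  | elim0 =>
    rw [← (Equiv.funUnique (Fin 1) (Fin N)).symm.sum_comp]
    simp [pathWeight, dotProduct]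
  | cons c C ih =>
    rw [sum_pi_fin_succ, sum_comm]
    simp only [← Fin.succ_last, Fin.cons_succ, ← sum_mul, sum_pathWeight_cons, ih,
      claimProd_cons, vecMul_vecMul]

theorem prob_eq_sum_claimProd {n : ℕ} (μ : Fin N → ℝ)
    {A : (Fin (n + 1) → Fin N) → (Fin n → ℕ) → Prop} (E : Finset (Fin n → ℕ))
    (F : Finset (Fin N)) (hA : ∀ J C, A J C ↔ C ∈ E ∧ J (Fin.last n) ∈ F) :
    prob Λ μ n A = ∑ C ∈ E, ∑ j ∈ F, (μ ᵥ* claimProd Λ C) j := by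
  classical
  have hsupp : ∀ p ∉ univ ×ˢ E,
      {p | A p.1 p.2}.indicator (fun p => pathWeight Λ μ n p.1 p.2) p = 0 := fun p hp =>
    Set.indicator_of_notMem (fun h => hp (mem_product.2 ⟨mem_univ _, ((hA _ _).1 h).1⟩)) _
  refine (_root_.tsum_subtype {p : (Fin (n + 1) → Fin N) × (Fin n → ℕ) | A p.1 p.2}
    fun p => pathWeight Λ μ n p.1 p.2).trans ?_
  rw [tsum_eq_sum hsupp, sum_product_right]
  refine sum_congr rfl fun C hC => ?_
  have h := sum_pathWeight_mul_last Λ μ (fun j => if j ∈ F then 1 else 0) C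
  simp only [dotProduct, mul_ite, mul_one, mul_zero, sum_ite_mem, univ_inter] at h
  rw [← h]
  exact sum_congr rfl fun J _ => by simp [Set.indicator_apply, hA, hC]

theorem sum_vecMul_eq_weightedTotal (μ : Fin N → ℝ) (A : Matrix (Fin N) (Fin N) ℝ) :
    ∑ j, (μ ᵥ* A) j = weightedTotal μ A := by
  simp only [vecMul, dotProduct, weightedTotal]
  exact sum_comm

end Paths

section Surplus

variable {n : ℕ}

theorem S_mono (C : Fin n → ℕ) : Monotone (S C) := fun a b hab =>
  sum_le_sum fun j _ => by split_ifs <;> omega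

theorem S_of_le (C : Fin n → ℕ) {k : ℕ} (hk : n ≤ k) : S C k = ∑ t, C t :=
  sum_congr rfl fun j _ => if_pos (by omega)

theorem S_castAdd {k r : ℕ} (C : Fin (k + r) → ℕ) {l : ℕ} (hl : l ≤ k) :
    S (fun t => C (Fin.castAdd r t)) l = S C l := by
  have hlate : ∑ t : Fin r, (if (Fin.natAdd k t : ℕ) < l then C (Fin.natAdd k t) else 0) = 0 :=
    sum_eq_zero fun t _ => if_neg (by simp only [Fin.val_natAdd]; omega)
  rw [S, S, Fin.sum_univ_add, hlate, add_zero]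
  rfl

/-- `τ_m^+ = k` for the surplus `X_l = l - S_l` of the claim sequence `C`. -/
def IsFirstPassage (C : Fin n → ℕ) (m k : ℕ) : Prop :=
  (∀ l < k, (l : ℤ) - S C l < m) ∧ (m : ℤ) ≤ k - S C k

instance (C : Fin n → ℕ) (m k : ℕ) : Decidable (IsFirstPassage C m k) := by
  unfold IsFirstPassage; infer_instance

theorem isFirstPassage_castAdd_iff {k r : ℕ} (C : Fin (k + r) → ℕ) (m : ℕ) :
    IsFirstPassage (fun t => C (Fin.castAdd r t)) m k ↔ IsFirstPassage C m k := by
  simp only [IsFirstPassage, S_castAdd C le_rfl]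
  refine and_congr_left' (forall₂_congr fun l hl => ?_)
  rw [S_castAdd C hl.le]

/-- The surplus moves up by at most one per step, so at its first passage it sits exactly at
level `m`. -/
theorem IsFirstPassage.S_add_eq {C : Fin n → ℕ} {m k : ℕ} (hm : 1 ≤ m)
    (h : IsFirstPassage C m k) : S C k + m = k := by
  have hprev := h.1 (k - 1) (by have := h.2; omega)
  have hmono := S_mono C (Nat.sub_le k 1)
  have := h.2
  omega

theorem IsFirstPassage.sum_eq {k m : ℕ} {C : Fin k → ℕ} (hm : 1 ≤ m)
    (h : IsFirstPassage C m k) : ∑ t, C t = k - m := by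
  have := h.S_add_eq hm
  rw [S_of_le C le_rfl] at this
  omega

theorem sum_eq_sum_stay_add_sum_isFirstPassage {M : Type*} [AddCommMonoid M] {m : ℕ}
    (hm : 1 ≤ m) (E : Finset (Fin n → ℕ)) (f : (Fin n → ℕ) → M) :
    ∑ C ∈ E, f C = ∑ C ∈ E with ∀ k < n, (k : ℤ) - S C k < m, f C +
      ∑ k ∈ Icc m (n - 1), ∑ C ∈ E with IsFirstPassage C m k, f C := by
  classical
  rw [← sum_filter_add_sum_filter_not E fun C => ∀ k < n, (k : ℤ) - S C k < m]
  congr 1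
  have hpass : ∀ C : Fin n → ℕ, ¬(∀ k < n, (k : ℤ) - S C k < m) →
      ∃ k, k < n ∧ (m : ℤ) ≤ k - S C k := fun C h => by push Not at h; exact h
  let τ : (Fin n → ℕ) → ℕ := fun C =>
    if h : ∃ k, k < n ∧ (m : ℤ) ≤ k - S C k then Nat.find h else 0
  have hτ : ∀ C h, τ C = Nat.find (hpass C h) := fun C h => dif_pos (hpass C h)
  have hmaps : ∀ C ∈ E.filter fun C => ¬(∀ k < n, (k : ℤ) - S C k < m),
      τ C ∈ Icc m (n - 1) := by
    intro C hC
    have hns := (mem_filter.1 hC).2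
    obtain ⟨hlt, hle⟩ := Nat.find_spec (hpass C hns)
    rw [hτ C hns, mem_Icc]
    omega
  have hfiber : ∀ k ∈ Icc m (n - 1), ∀ C,
      (¬(∀ k < n, (k : ℤ) - S C k < m) ∧ τ C = k) ↔ IsFirstPassage C m k := by
    intro k hk C
    have hkn : k < n := by rw [mem_Icc] at hk; omega
    constructor
    · rintro ⟨hns, rfl⟩
      rw [hτ C hns]
      refine ⟨fun l hl => ?_, (Nat.find_spec (hpass C hns)).2⟩
      have := Nat.find_min (hpass C hns) hl
      have := (Nat.find_spec (hpass C hns)).1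
      omega
    · intro hfp
      have hns : ¬(∀ k < n, (k : ℤ) - S C k < m) := fun hs => by
        have := hs k hkn; have := hfp.2; omega
      refine ⟨hns, ?_⟩
      rw [hτ C hns, Nat.find_eq_iff]
      exact ⟨⟨hkn, hfp.2⟩, fun l hl ⟨_, hle⟩ => by have := hfp.1 l hl; omega⟩
  rw [← sum_fiberwise_of_maps_to hmaps]
  refine sum_congr rfl fun k hk => ?_
  rw [filter_filter]
  exact sum_congr (filter_congr fun C _ => hfiber k hk C) fun _ _ => rfl

end Surplus

theorem hitM_eq_sum_claimProd {N : ℕ} (Λ : ℕ → Matrix (Fin N) (Fin N) ℝ) {k m : ℕ} (hm : 1 ≤ m)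
    (i j : Fin N) :
    hitM Λ k m i j =
      ∑ u ∈ finAntidiagonal k (k - m) with IsFirstPassage u m k, claimProd Λ u i j := by
  have hdelta : delta i = Pi.single i 1 := funext fun i' => by simp [delta, Pi.single_apply]
  rw [hitM, prob_eq_sum_claimProd Λ (delta i)
    ((finAntidiagonal k (k - m)).filter fun u => IsFirstPassage u m k) {j} fun J C => ?_]
  · simp [hdelta]
  · simp only [mem_filter, mem_finAntidiagonal, mem_singleton, ← and_assoc]
    exact and_congr_left fun _ => ⟨fun h => ⟨IsFirstPassage.sum_eq hm h, h⟩, fun h => h.2⟩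

theorem sum_weightedTotal_claimProd_lamTilde {N : ℕ} (Λ : ℕ → Matrix (Fin N) (Fin N) ℝ)
    {π : Fin N → ℝ} (hπ : ∀ i, π i ≠ 0) (n s : ℕ) :
    ∑ C ∈ finAntidiagonal n s, weightedTotal π (claimProd (lamTilde Λ π) C) =
      weightedTotal π (conv Λ n s) := by
  rw [← weightedTotal_sum, sum_claimProd_finAntidiagonal, conv_lamTilde Λ hπ,
    weightedTotal_piReverse hπ]

theorem sum_weightedTotal_claimProd_lamTilde_isFirstPassage {N : ℕ}
    (Λ : ℕ → Matrix (Fin N) (Fin N) ℝ) {π : Fin N → ℝ} (hπ : ∀ i, π i ≠ 0) {k m : ℕ}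
    (hm : 1 ≤ m) (r s : ℕ) :
    ∑ C ∈ finAntidiagonal (k + r) (k - m + s) with IsFirstPassage C m k,
        weightedTotal π (claimProd (lamTilde Λ π) C) =
      weightedTotal π (conv Λ r s * Vmat Λ π k m) := by
  simp_rw [← isFirstPassage_castAdd_iff]
  rw [sum_finAntidiagonal_append (fun u => IsFirstPassage u m k) fun u hu => hu.sum_eq hm]
  simp only [claimProd_append, ← weightedTotal_sum, ← Matrix.mul_sum, ← Matrix.sum_mul]
  rw [sum_claimProd_finAntidiagonal, ← weightedTotal_piReverse hπ, piReverse_mul hπ,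
    conv_lamTilde Λ hπ, piReverse_piReverse hπ, Vmat_eq]
  congr 3
  ext i j
  rw [hitM_eq_sum_claimProd _ hm, Matrix.sum_apply]

theorem reversed_first_passage_decomposition_general
    {N : ℕ}
    (Λ : ℕ → Matrix (Fin N) (Fin N) ℝ)
    (π : Fin N → ℝ) (hπpos : ∀ i, 0 < π i)
    (x n m : ℕ) (hm : 1 ≤ m) (hmx : m ≤ x + n) :
    prob (lamTilde Λ π) π n (fun _J C =>
        (∀ k, k < n → (k : ℤ) - S C k < (m : ℤ)) ∧ (n : ℤ) - S C n = (m : ℤ) - x) =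
      (∑ i, ∑ j, π i * conv Λ n (n + x - m) i j) -
        ∑ k ∈ Finset.Icc m (n - 1), ∑ i, ∑ j,
          π i * (conv Λ (n - k) (n + x - k) * Vmat Λ π k m) i j := by
  have hπ : ∀ i, π i ≠ 0 := fun i => (hπpos i).ne'
  rw [prob_eq_sum_claimProd (lamTilde Λ π) π
    ((finAntidiagonal n (n + x - m)).filter fun C => ∀ k < n, (k : ℤ) - S C k < m) univ
    fun _ C => by
      simp only [mem_filter, mem_finAntidiagonal, mem_univ, and_true, S_of_le C le_rfl]
      exact ⟨fun ⟨h₁, h₂⟩ => ⟨by omega, h₁⟩, fun ⟨h₁, h₂⟩ => ⟨h₂, by omega⟩⟩]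
  have hterm : ∀ k ∈ Icc m (n - 1),
      ∑ C ∈ finAntidiagonal n (n + x - m) with IsFirstPassage C m k,
          weightedTotal π (claimProd (lamTilde Λ π) C) =
        weightedTotal π (conv Λ (n - k) (n + x - k) * Vmat Λ π k m) := by
    intro k hk
    obtain ⟨hmk, hkn⟩ := mem_Icc.1 hk
    obtain ⟨r, rfl⟩ : ∃ r, n = k + r := ⟨n - k, by omega⟩
    rw [show k + r + x - m = k - m + (r + x) by omega, show k + r - k = r by omega,
      show k + r + x - k = r + x by omega]
    exact sum_weightedTotal_claimProd_lamTilde_isFirstPassage Λ hπ hm r (r + x)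
  have htotal := sum_weightedTotal_claimProd_lamTilde Λ hπ n (n + x - m)
  rw [sum_eq_sum_stay_add_sum_isFirstPassage hm, sum_congr rfl hterm] at htotal
  simp only [sum_vecMul_eq_weightedTotal]
  simp only [weightedTotal] at htotal ⊢
  linarith

/-- First-passage decomposition for the reversed process.  Assume the
environment chain stationary with distribution `π`.  For every `x`, `n ≥ 1` and
`1 ≤ m ≤ x + n`,
`P_π(τ̃_m^+ ≥ n, X̃_n = m − x) = π·Λ^{*n}(n+x−m)·e −
Σ_{k=m}^{n−1} π·Λ^{*(n−k)}(n+x−k)·V(k,m)·e`. -/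
theorem reversed_first_passage_decomposition
    {N : ℕ} (hN : 1 ≤ N)
    (Λ : ℕ → Matrix (Fin N) (Fin N) ℝ) (P : Matrix (Fin N) (Fin N) ℝ)
    (hΛ : ∀ m i j, 0 ≤ Λ m i j)
    (hP : ∀ i j, HasSum (fun m => Λ m i j) (P i j))
    (hPstoch : ∀ i, ∑ j, P i j = 1)
    (π : Fin N → ℝ) (hπpos : ∀ i, 0 < π i) (hπsum : ∑ i, π i = 1)
    (hπP : ∀ j, ∑ i, π i * P i j = π j)
    (x n m : ℕ) (hn : 1 ≤ n) (hm : 1 ≤ m) (hmx : m ≤ x + n) :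
    prob (lamTilde Λ π) π n (fun _J C =>
        (∀ k, k < n → (k : ℤ) - S C k < (m : ℤ)) ∧ (n : ℤ) - S C n = (m : ℤ) - x) =
      (∑ i, ∑ j, π i * conv Λ n (n + x - m) i j) -
        ∑ k ∈ Finset.Icc m (n - 1), ∑ i, ∑ j,
          π i * (conv Λ (n - k) (n + x - k) * Vmat Λ π k m) i j :=
  reversed_first_passage_decomposition_general Λ π hπpos x n m hm hmx

end CMB
end
end
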